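/- For all natural numbers a, b, d, m, p, we have ∑_{k=0}^{a} C(a,k)·C(b,m+k)·C(p+k, a+b−d)·C(m+k,d) = C(d+p−m, b−m)·C(p, m+a−d)·C(b,d). -/

import Mathlib

/-- Binomial coefficient for integers: `C x y` is the usual binomial coefficient
when `0 ≤ y ≤ x`, and `0` otherwise. -/
def C (x y : ℤ) : ℤ := if 0 ≤ y ∧ y ≤ x then (x.toNat.choose y.toNat : ℤ) else 0

/-! Since `C b (m + k) * C (m + k) d = C b d * C (b - d) (m + k - d)`, the factor `C b d` comes out.
Expanding `C (p + k) (a + b - d) = ∑ j, C k j * C p (a + b - d - j)` by Vandermonde and summing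
over `k` first, `C a k * C k j = C a j * C (a - j) (k - j)` and a second Vandermonde sum give
`C (a + b - d - j) (m + a - d)`. Then
`C p (a + b - d - j) * C (a + b - d - j) (m + a - d) = C p (m + a - d) * C (d + p - m - a) (b - m - j)`,
and a third Vandermonde sum over `j` yields `C (d + p - m) (b - m)`. Because `C` is extended by zero,
these identities hold for arbitrary integer lower arguments. -/

open Finset

theorem C_of_neg {x y : ℤ} (h : y < 0) : C x y = 0 := by
  rw [C, if_neg (by omega)]

theorem C_of_lt {x y : ℤ} (h : x < y) : C x y = 0 := by
  rw [C, if_neg (by omega)]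

theorem C_natCast (n k : ℕ) : C n k = n.choose k := by
  rcases le_or_gt k n with h | h
  · simp [C, h]
  · rw [C_of_lt (by exact_mod_cast h), Nat.choose_eq_zero_of_lt h, Nat.cast_zero]

theorem C_natCast_sub (n : ℕ) (y : ℤ) : C n (n - y) = C n y := by
  by_cases h : 0 ≤ y ∧ y ≤ n
  · lift y to ℕ using h.1
    rw [show (n : ℤ) - y = (n - y : ℕ) by omega, C_natCast, C_natCast,
      Nat.choose_symm (by omega)]
  · rw [C, C, if_neg h, if_neg (by omega)]

theorem C_mul_C (x y z : ℤ) : C x y * C y z = C x z * C (x - z) (y - z) := by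
  rcases lt_or_ge z 0 with hz | hz
  · rw [C_of_neg hz, C_of_neg hz]; ring
  rcases lt_or_ge y z with hyz | hyz
  · rw [C_of_lt hyz, C_of_neg (show y - z < 0 by omega)]; ring
  rcases lt_or_ge x y with hxy | hxy
  · rw [C_of_lt hxy, C_of_lt (show x - z < y - z by omega)]; ring
  lift z to ℕ using hz
  lift y to ℕ using (by omega)
  lift x to ℕ using (by omega)
  rw [show (x : ℤ) - z = (x - z : ℕ) by omega, show (y : ℤ) - z = (y - z : ℕ) by omega,
    C_natCast, C_natCast, C_natCast, C_natCast]
  exact_mod_cast Nat.choose_mul (by omega)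

theorem sum_range_C_mul_C_sub (n m N : ℕ) (hn : n ≤ N) (t : ℤ) :
    ∑ j ∈ range (N + 1), C n j * C m (t - j) = C (n + m : ℕ) t := by
  rcases lt_or_ge t 0 with ht | ht
  · rw [C_of_neg ht]
    exact sum_eq_zero fun j _ => by rw [C_of_neg (x := m) (by omega), mul_zero]
  lift t to ℕ using ht
  calc ∑ j ∈ range (N + 1), C n j * C m (t - j)
      = ∑ j ∈ range (N + t + 1), C n j * C m (t - j) :=
        sum_subset (range_subset_range.mpr (by omega)) fun j _ hj => by
          rw [C_of_lt (by simp at hj; omega), zero_mul]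
    _ = ∑ j ∈ range (t + 1), C n j * C m (t - j) :=
        (sum_subset (range_subset_range.mpr (by omega)) fun j _ hj => by
          rw [C_of_neg (x := m) (by simp at hj; omega), mul_zero]).symm
    _ = ∑ j ∈ range (t + 1), ((n.choose j * m.choose (t - j) : ℕ) : ℤ) :=
        sum_congr rfl fun j hj => by
          rw [show (t : ℤ) - j = (t - j : ℕ) by simp at hj; omega, C_natCast, C_natCast,
            Nat.cast_mul]
    _ = C (n + m : ℕ) t := by
        rw [C_natCast, Nat.add_choose_eq,
          Nat.sum_antidiagonal_eq_sum_range_succ (fun i j => n.choose i * m.choose j),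
          Nat.cast_sum]

theorem sum_range_C_mul_C_add (n m : ℕ) (t : ℤ) :
    ∑ i ∈ range (n + 1), C n i * C m (t + i) = C (n + m : ℕ) (n + t) := by
  calc ∑ i ∈ range (n + 1), C n i * C m (t + i)
      = ∑ i ∈ range (n + 1), C n i * C m (m - t - i) :=
        sum_congr rfl fun i _ => by rw [sub_sub, C_natCast_sub]
    _ = C (n + m : ℕ) (n + t) := by
        rw [sum_range_C_mul_C_sub n m n le_rfl, ← C_natCast_sub]
        congr 1; push_cast; ring

theorem sum_range_C_mul_C_mul_C_add {a j : ℕ} (hj : j ≤ a) (e : ℕ) (c : ℤ) :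
    ∑ k ∈ range (a + 1), C a k * C k j * C e (c + k) = C a j * C (a - j + e) (a + c) := by
  obtain ⟨u, rfl⟩ := Nat.exists_eq_add_of_le hj
  rw [show j + u + 1 = j + (u + 1) by ring, sum_range_add,
    sum_eq_zero fun k hk => by rw [C_of_lt (x := k) (by simp at hk; omega)]; ring, zero_add]
  calc ∑ i ∈ range (u + 1), C (j + u : ℕ) (j + i : ℕ) * C (j + i : ℕ) j * C e (c + (j + i : ℕ))
      = ∑ i ∈ range (u + 1), C (j + u : ℕ) j * (C u i * C e ((c + j) + i)) :=
        sum_congr rfl fun i _ => by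
          rw [C_mul_C]; push_cast; ring_nf
    _ = C (j + u : ℕ) j * C ((j + u : ℕ) - j + e) ((j + u : ℕ) + c) := by
        rw [← mul_sum, sum_range_C_mul_C_add]; push_cast; ring_nf

theorem sum_range_C_mul_C_mul_C (a p : ℕ) (c s : ℤ) :
    ∑ j ∈ range (a + 1), C a j * (C p (c - j) * C (c - j) s) = C p s * C (a + p - s) (c - s) := by
  simp_rw [C_mul_C (p : ℤ) _ s]
  by_cases hs : C p s = 0
  · simp [hs]
  obtain ⟨q, hq⟩ : ∃ q : ℕ, (p : ℤ) - s = q :=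
    ⟨((p : ℤ) - s).toNat, by have := not_lt.mp fun h => hs (C_of_lt h); omega⟩
  rw [hq, show (a : ℤ) + p - s = (a + q : ℕ) by push_cast; omega,
    ← sum_range_C_mul_C_sub a q a le_rfl, mul_sum]
  exact sum_congr rfl fun j _ => by rw [sub_right_comm]; ring

theorem stmt_12 (a b d m p : ℕ) :
    ∑ k ∈ Finset.range (a + 1), C a k * C b ((m : ℤ) + k) * C ((p : ℤ) + k) ((a : ℤ) + b - d) * C ((m : ℤ) + k) d = C ((d : ℤ) + p - m) ((b : ℤ) - m) * C p ((m : ℤ) + a - d) * C b d := by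
  rcases lt_or_ge b d with hbd | hdb
  · rw [C_of_lt (by exact_mod_cast hbd : (b : ℤ) < d), mul_zero]
    refine sum_eq_zero fun k _ => ?_
    rcases lt_or_ge (b : ℤ) (m + k) with h | h
    · rw [C_of_lt h]; ring
    · rw [C_of_lt (show (m : ℤ) + k < d by omega)]; ring
  obtain ⟨e, rfl⟩ := Nat.exists_eq_add_of_le hdb
  set s : ℤ := (m : ℤ) + a - d
  have hδ : (a : ℤ) + (d + e : ℕ) - d = a + e := by push_cast; ring
  have hpair (k : ℕ) : C (d + e : ℕ) (m + k) * C (m + k) d = C (d + e : ℕ) d * C e (m - d + k) := by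
    rw [C_mul_C]; push_cast; ring_nf
  have hvand (k : ℕ) (hk : k ∈ range (a + 1)) :
      C ((p : ℤ) + k) (a + e) = ∑ j ∈ range (a + 1), C k j * C p (a + e - j) := by
    rw [sum_range_C_mul_C_sub k p a (mem_range_succ_iff.mp hk), Nat.cast_add, add_comm (k : ℤ)]
  calc _ = ∑ k ∈ range (a + 1),
          C (d + e : ℕ) d * (C a k * C e (m - d + k) * ∑ j ∈ range (a + 1), C k j * C p (a + e - j)) :=
        sum_congr rfl fun k hk => by
          rw [hδ, ← hvand k hk]
          linear_combination C a k * C ((p : ℤ) + k) (a + e) * hpair k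
    _ = C (d + e : ℕ) d * ∑ j ∈ range (a + 1),
          C p (a + e - j) * ∑ k ∈ range (a + 1), C a k * C k j * C e (m - d + k) := by
        simp_rw [mul_sum]
        rw [sum_comm]
        exact sum_congr rfl fun j _ => sum_congr rfl fun k _ => by ring
    _ = C (d + e : ℕ) d * ∑ j ∈ range (a + 1), C a j * (C p (a + e - j) * C (a + e - j) s) := by
        congr 1
        refine sum_congr rfl fun j hj => ?_
        rw [sum_range_C_mul_C_mul_C_add (mem_range_succ_iff.mp hj), sub_add_eq_add_sub,
          show (a : ℤ) + (m - d) = s by ring]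
        ring
    _ = _ := by
        rw [sum_range_C_mul_C_mul_C, show (a : ℤ) + p - s = d + p - m by ring,
          show (a : ℤ) + e - s = (d + e : ℕ) - m by push_cast; ring]
        ring
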